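/- Let λ⁽¹⁾, λ⁽²⁾, λ⁽³⁾ and λ̃⁽¹⁾, λ̃⁽²⁾, λ̃⁽³⁾ be vectors in ℂ² satisfying momentum conservation for three particles, i.e. Σᵢ₌₁³ λ_α⁽ⁱ⁾ λ̃_β⁽ⁱ⁾ = 0 for each α, β ∈ {1,2}. If ⟨12⟩ ≠ 0, then [12] = [13] = [23] = 0 (three-particle kinematics splits into holomorphic and anti-holomorphic configurations). -/
import Mathlib


/-- The antisymmetric spinor bracket: `⟨uv⟩ = u₁v₂ − u₂v₁` (also used for square brackets). -/
def sbr (u v : Fin 2 → ℂ) : ℂ := u 0 * v 1 - u 1 * v 0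

theorem stmt_16 (lam lamt : Fin 3 → Fin 2 → ℂ)
    (hmom : ∀ α β : Fin 2, ∑ i : Fin 3, lam i α * lamt i β = 0)
    (h12 : sbr (lam 0) (lam 1) ≠ 0) :
    sbr (lamt 0) (lamt 1) = 0 ∧ sbr (lamt 0) (lamt 2) = 0 ∧ sbr (lamt 1) (lamt 2) = 0 := by
  set s := sbr (lam 0) (lam 1) with hs
  -- contracted equations
  have hA : ∀ β, s * lamt 1 β + sbr (lam 0) (lam 2) * lamt 2 β = 0 := by
    intro β
    have h1 := hmom 0 β
    have h2 := hmom 1 β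
    simp only [Fin.sum_univ_three] at h1 h2
    simp only [hs, sbr]
    linear_combination lam 0 0 * h2 - lam 0 1 * h1
  have hB : ∀ β, -s * lamt 0 β + sbr (lam 1) (lam 2) * lamt 2 β = 0 := by
    intro β
    have h1 := hmom 0 β
    have h2 := hmom 1 β
    simp only [Fin.sum_univ_three] at h1 h2
    simp only [hs, sbr]
    linear_combination lam 1 0 * h2 - lam 1 1 * h1
  have hss : s * s ≠ 0 := mul_ne_zero h12 h12
  refine ⟨?_, ?_, ?_⟩
  · have h : s * s * sbr (lamt 0) (lamt 1) = 0 := by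
      simp only [sbr]
      linear_combination (-(s * lamt 1 1)) * hB 0 + (s * lamt 1 0) * hB 1
        + (sbr (lam 1) (lam 2) * lamt 2 0) * hA 1 - (sbr (lam 1) (lam 2) * lamt 2 1) * hA 0
    exact (mul_eq_zero.mp h).resolve_left hss
  · have h : s * s * sbr (lamt 0) (lamt 2) = 0 := by
      simp only [sbr]
      linear_combination (-(s * lamt 2 1)) * hB 0 + (s * lamt 2 0) * hB 1
    exact (mul_eq_zero.mp h).resolve_left hss
  · have h : s * s * sbr (lamt 1) (lamt 2) = 0 := by
      simp only [sbr]
      linear_combination (s * lamt 2 1) * hA 0 - (s * lamt 2 0) * hA 1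
    exact (mul_eq_zero.mp h).resolve_left hss
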